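/- Let $\Gamma' \subseteq \Gamma$ be groups and let $G' \subseteq \Gamma'$ be a subgroup that maps onto every finite quotient of $\Gamma'$ (i.e. for every finite-index normal subgroup $N \trianglelefteq \Gamma'$, the composite $G' \to \Gamma'/N$ is surjective). Then for every finite-index subgroup $\Gamma'' \leq \Gamma'$, the subgroup $G'' = G' \cap \Gamma''$ maps onto every finite quotient of $\Gamma''$. -/

import Mathlib

/-!
Given `N'' ≤ Γ''` of finite index, its image `M` in `Γ'` has finite index, hence so has the
normal core of `M`. Applying the hypothesis to that core gives `g ∈ G'` with `x⁻¹ * g ∈ M`;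
since `x ∈ Γ''` and `M ≤ Γ''`, this forces `g ∈ Γ''` and `x⁻¹ * g ∈ N''`.
-/

namespace Subgroup

variable {G : Type*} [Group G]

instance finiteIndex_map_subtype {H : Subgroup G} (K : Subgroup H) [H.FiniteIndex]
    [K.FiniteIndex] : (K.map H.subtype).FiniteIndex :=
  finiteIndex_iff.mpr <| by
    rw [index_map_subtype]
    exact Nat.mul_ne_zero FiniteIndex.index_ne_zero FiniteIndex.index_ne_zero

theorem exists_mem_inv_mul_mem_of_finiteIndex {S : Subgroup G}
    (hS : ∀ N : Subgroup G, N.Normal → N.FiniteIndex → ∀ x : G, ∃ g ∈ S, x⁻¹ * g ∈ N)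
    (M : Subgroup G) [M.FiniteIndex] (x : G) : ∃ g ∈ S, x⁻¹ * g ∈ M := by
  obtain ⟨g, hgS, hg⟩ := hS M.normalCore M.normalCore_normal inferInstance x
  exact ⟨g, hgS, M.normalCore_le hg⟩

theorem exists_inv_mul_mem_of_inv_mul_mem_map_subtype {H : Subgroup G} {K : Subgroup H}
    {x : H} {g : G} (hg : (x : G)⁻¹ * g ∈ K.map H.subtype) :
    ∃ g' : H, (g' : G) = g ∧ x⁻¹ * g' ∈ K := by
  obtain ⟨n, hn, hn_eq⟩ := hg
  refine ⟨x * n, ?_, by simpa using hn⟩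
  simp only [coe_subtype] at hn_eq
  simp [hn_eq]

end Subgroup

/-- let `G'` be a subgroup of a group `Γ'` that maps onto every finite
quotient of `Γ'`. Then for every finite-index subgroup `Γ'' ≤ Γ'`, the subgroup
`G'' = G' ∩ Γ''` maps onto every finite quotient of `Γ''`. -/
theorem inter_maps_onto_finite_quotients
    {Γ' : Type*} [Group Γ'] (G' : Subgroup Γ')
    (hsurj : ∀ N : Subgroup Γ', N.Normal → N.FiniteIndex →
      ∀ x : Γ', ∃ g ∈ G', x⁻¹ * g ∈ N) :
    ∀ Γ'' : Subgroup Γ', Γ''.FiniteIndex →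
      ∀ N'' : Subgroup ↥Γ'', N''.Normal → N''.FiniteIndex →
        ∀ x : ↥Γ'', ∃ g : ↥Γ'', (g : Γ') ∈ G' ∧ x⁻¹ * g ∈ N'' := by
  intro Γ'' _ N'' _ _ x
  obtain ⟨g, hgG, hg⟩ :=
    Subgroup.exists_mem_inv_mul_mem_of_finiteIndex hsurj (N''.map Γ''.subtype) x
  obtain ⟨g', rfl, hg'⟩ := Subgroup.exists_inv_mul_mem_of_inv_mul_mem_map_subtype hg
  exact ⟨g', hgG, hg'⟩
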